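/- Let x₁ > x₂ > ... > xₙ be real numbers with n ≥ 2. Then the sum over i from 1 to n of softmax(0, x₁, ..., x̂ᵢ, ..., xₙ) evaluated at coordinate i-1 is strictly greater than 1, where x̂ᵢ denotes omission of xᵢ, and softmax(0, y₁, ..., y_{n-1}) at coordinate j (for j ∈ {0, ..., n-1}) equals e^{y_j}/(1 + e^{y₁} + ... + e^{y_{n-1}}) with the convention e^{y₀} := 1. -/

import Mathlib

/-!
Since `x n` is the smallest entry, every denominator `1 + ∑_{j ≠ i} e^{x j}` is at most the
last one, `D = 1 + e^{x 1} + ⋯ + e^{x (n-1)}`, which is also the sum of the numerators. Hence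
the sum is at least `∑ numerators / D = 1`, strictly so because the first denominator is
smaller than `D`.
-/

open Finset

theorem one_lt_sum_div_of_sum_eq {K ι : Type*} [Field K] [LinearOrder K] [IsStrictOrderedRing K]
    {s : Finset ι} {a b : ι → K} {D : K} (ha : ∀ i ∈ s, 0 ≤ a i) (hb : ∀ i ∈ s, 0 < b i)
    (hbD : ∀ i ∈ s, b i ≤ D) (hsum : ∑ i ∈ s, a i = D) {k : ι} (hk : k ∈ s)
    (hak : 0 < a k) (hbk : b k < D) : 1 < ∑ i ∈ s, a i / b i := by
  have hD : 0 < D := hak.trans_le (hsum ▸ single_le_sum ha hk)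
  calc 1 = ∑ i ∈ s, a i / D := by rw [← sum_div, hsum, div_self hD.ne']
    _ < ∑ i ∈ s, a i / b i :=
      sum_lt_sum (fun i hi => div_le_div_of_nonneg_left (ha i hi) (hb i hi) (hbD i hi))
        ⟨k, hk, div_lt_div_of_pos_left hak (hb k hk) hbk⟩

theorem Nat.sum_Ioc_comp_sub_one {M : Type*} [AddCommMonoid M] (f : ℕ → M) (a b : ℕ) :
    ∑ i ∈ Ioc a b, f (i - 1) = ∑ i ∈ Ico a b, f i := by
  rw [← Ico_add_one_add_one_eq_Ioc, ← sum_Ico_add']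
  simp

theorem Nat.sum_Icc_one_ite_sub_one {M : Type*} [AddCommMonoid M] (c : M) (f : ℕ → M) {n : ℕ}
    (hn : 1 ≤ n) :
    ∑ i ∈ Icc 1 n, (if i = 1 then c else f (i - 1)) = c + ∑ i ∈ Ico 1 n, f i := by
  rw [← add_sum_erase _ _ (left_mem_Icc.2 hn), Icc_erase_left, if_pos rfl,
    sum_congr rfl fun i hi => if_neg (mem_Ioc.1 hi).1.ne', Nat.sum_Ioc_comp_sub_one]

/-- For reals `x 1 > x 2 > ⋯ > x n` with `n ≥ 2`, the sum over `i` of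
`softmax (0, x 1, …, x̂ i, …, x n)` evaluated at coordinate `i - 1` exceeds `1`.
The `(i-1)`-th entry of the tuple `(0, x 1, …, x̂ i, …, x n)` is `0` when `i = 1`
and `x (i-1)` otherwise, while the denominator is `1 + ∑_{j ≠ i} e^{x j}`. -/
theorem softmax_sum_gt_one (n : ℕ) (hn : 2 ≤ n) (x : ℕ → ℝ)
    (hanti : ∀ i j, 1 ≤ i → i < j → j ≤ n → x j < x i) :
    ∑ i ∈ Finset.Icc 1 n,
        (if i = 1 then 1 else Real.exp (x (i - 1))) /
          (1 + ∑ j ∈ (Finset.Icc 1 n).erase i, Real.exp (x j)) > 1 := by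
  have h1 : 1 ∈ Icc 1 n := left_mem_Icc.2 (by omega)
  have hn_mem : n ∈ Icc 1 n := right_mem_Icc.2 (by omega)
  refine one_lt_sum_div_of_sum_eq (D := 1 + ∑ j ∈ (Icc 1 n).erase n, Real.exp (x j))
    (fun i _ => by positivity) (fun i _ => by positivity) (fun i hi => ?_) ?_ h1 one_pos ?_
  · obtain ⟨h1i, hin⟩ := mem_Icc.1 hi
    have hx : x n ≤ x i := hin.lt_or_eq.elim (fun h => (hanti i n h1i h le_rfl).le) (· ▸ le_rfl)
    rw [sum_erase_eq_sub hi, sum_erase_eq_sub hn_mem]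
    gcongr
  · rw [Nat.sum_Icc_one_ite_sub_one 1 (fun j => Real.exp (x j)) (by omega), Icc_erase_right]
  · rw [sum_erase_eq_sub h1, sum_erase_eq_sub hn_mem]
    gcongr
    exact hanti 1 n le_rfl (by omega) le_rfl
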